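/- Let f: T → X be order-Henstock integrable. Then there exist an (o)-sequence (b_n) and gages (γ_n) such that for every n and every partition Π = {(E, τ_E)} with alternative tags τ′_E, satisfying E ⊆ γ_n(τ_E) and E ⊆ γ_n(τ′_E) for all E, one has Σ_{E∈Π} |f(τ_E)μ(E) − f(τ′_E)μ(E)| ≤ b_n. -/

import Mathlib

open MeasureTheory Set Filter

/-- A tagged partition of the set `A`: finitely many pairwise disjoint measurable
sets covering `A`, each with a tag point. -/
structure TaggedPart (T : Type*) [MeasurableSpace T] (A : Set T) where
  k : ℕ
  E : Fin k → Set T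
  tag : Fin k → T
  meas : ∀ i, MeasurableSet (E i)
  disj : ∀ i j, i ≠ j → Disjoint (E i) (E j)
  cover : (⋃ i, E i) = A

namespace TaggedPart

variable {T : Type*} [MeasurableSpace T] {A : Set T}

/-- A Henstock partition: each tag belongs to its set. -/
def IsHenstock (P : TaggedPart T A) : Prop := ∀ i, P.tag i ∈ P.E i

/-- `γ`-fineness: each set is within distance `γ (tag)` of its tag. -/
def IsFine [PseudoMetricSpace T] (γ : T → ℝ) (P : TaggedPart T A) : Prop :=
  ∀ i, ∀ w ∈ P.E i, dist w (P.tag i) < γ (P.tag i)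

/-- The Riemann sum `σ(f, P) = ∑ μ(Eᵢ) • f(tᵢ)`. -/
noncomputable def sum {X : Type*} [AddCommMonoid X] [Module ℝ X]
    (P : TaggedPart T A) (f : T → X) (μ : Measure T) : X :=
  ∑ i, (μ (P.E i)).toReal • f (P.tag i)

end TaggedPart

/-- A gage is a strictly positive function. -/
def IsGage {T : Type*} (γ : T → ℝ) : Prop := ∀ t, 0 < γ t

/-- An (o)-sequence: decreasing with infimum `0`. -/
def IsOSeq {X : Type*} [Lattice X] [AddCommGroup X] (b : ℕ → X) : Prop :=
  Antitone b ∧ IsGLB (Set.range b) 0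

section Defs

variable {T : Type*} [MeasurableSpace T] [PseudoMetricSpace T]
  {X : Type*} [NormedAddCommGroup X] [Lattice X] [HasSolidNorm X] [IsOrderedAddMonoid X] [NormedSpace ℝ X]

/-- Order-Henstock integrability of `f` on `A` with integral `J`. -/
def HasOHIntegralOn (f : T → X) (μ : Measure T) (A : Set T) (J : X) : Prop :=
  ∃ b : ℕ → X, IsOSeq b ∧ ∃ γ : ℕ → T → ℝ, (∀ n, IsGage (γ n)) ∧
    ∀ n (P : TaggedPart T A), P.IsHenstock → P.IsFine (γ n) →
      |P.sum f μ - J| ≤ b n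

/-- Order-McShane (free partition) integrability of `f` on `A` with integral `J`. -/
def HasOMIntegralOn (f : T → X) (μ : Measure T) (A : Set T) (J : X) : Prop :=
  ∃ b : ℕ → X, IsOSeq b ∧ ∃ γ : ℕ → T → ℝ, (∀ n, IsGage (γ n)) ∧
    ∀ n (P : TaggedPart T A), P.IsFine (γ n) → |P.sum f μ - J| ≤ b n

/-- Order-McShane integrability with a prescribed regulating (o)-sequence `b`. -/
def HasOMIntegralOnWith (f : T → X) (μ : Measure T) (A : Set T) (J : X)
    (b : ℕ → X) : Prop :=
  ∃ γ : ℕ → T → ℝ, (∀ n, IsGage (γ n)) ∧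
    ∀ n (P : TaggedPart T A), P.IsFine (γ n) → |P.sum f μ - J| ≤ b n

/-- Norm-Henstock integrability of `f` on `A` with integral `J`. -/
def HasNormHIntegralOn (f : T → X) (μ : Measure T) (A : Set T) (J : X) : Prop :=
  ∀ ε : ℝ, 0 < ε → ∃ γ : T → ℝ, IsGage γ ∧
    ∀ P : TaggedPart T A, P.IsHenstock → P.IsFine γ → ‖P.sum f μ - J‖ ≤ ε

/-- Norm-McShane (free partition) integrability of `f` on `A` with integral `J`. -/
def HasNormMIntegralOn (f : T → X) (μ : Measure T) (A : Set T) (J : X) : Prop :=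
  ∀ ε : ℝ, 0 < ε → ∃ γ : T → ℝ, IsGage γ ∧
    ∀ P : TaggedPart T A, P.IsFine γ → ‖P.sum f μ - J‖ ≤ ε

end Defs

/-!
Fix `n` and let `S` be the finite set of all tags `τᵢ`, `τ'ᵢ`. Away from `S`: turn the points of
`S` into singleton pieces and attach each `Eᵢ \ S` to the singleton of `τᵢ` or of `τ'ᵢ`. This gives
Henstock `γₙ`-fine partitions, and comparing two of them with complementary choices bounds each
signed sum `∑ ±μ(Eᵢ \ S) • (f τᵢ - f τ'ᵢ)` by `2 bₙ`; in a lattice-ordered group the largest signed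
sum is the sum of the absolute values. On the atoms `t ∈ S`, `f` at a tag of the piece containing
`t` is compared with `f t`: either `t` is a singleton piece or it joins the piece of that tag, in a
Henstock partition of the remaining space obtained by compactness. A 3-colouring of the map
sending `t` to that tag makes the choices for different atoms independent. In total the bound is
`14 bₙ`.
-/

section LatticeOrderedGroup

variable {X : Type*} [Lattice X] [AddCommGroup X]

theorem IsOSeq.nonneg {b : ℕ → X} (hb : IsOSeq b) (n : ℕ) : 0 ≤ b n :=
  hb.2.1 ⟨n, rfl⟩

theorem IsOSeq.zero : IsOSeq (0 : ℕ → X) :=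
  ⟨antitone_const, by simp [isGLB_singleton]⟩

variable [IsOrderedAddMonoid X]

theorem IsOSeq.add {b c : ℕ → X} (hb : IsOSeq b) (hc : IsOSeq c) : IsOSeq (b + c) := by
  refine ⟨hb.1.add hc.1, ?_, fun x hx => ?_⟩
  · rintro _ ⟨n, rfl⟩
    exact add_nonneg (hb.nonneg n) (hc.nonneg n)
  have hx' : ∀ n, x ≤ b n + c n := fun n => hx ⟨n, rfl⟩
  have hxb : ∀ m n, x - c m ≤ b n := fun m n => by
    rcases le_total m n with hmn | hnm
    · exact sub_le_iff_le_add.mpr ((hx' n).trans (add_le_add_right (hc.1 hmn) _))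
    · exact (sub_le_iff_le_add.mpr (hx' m)).trans (hb.1 hnm)
  have hxc : ∀ m, x ≤ c m := fun m =>
    sub_nonpos.mp (hb.2.2 (by rintro _ ⟨n, rfl⟩; exact hxb m n))
  exact hc.2.2 (by rintro _ ⟨m, rfl⟩; exact hxc m)

theorem IsOSeq.nsmul {b : ℕ → X} (hb : IsOSeq b) (N : ℕ) : IsOSeq (N • b) := by
  induction N with
  | zero => simpa using IsOSeq.zero
  | succ N ih => simpa [succ_nsmul] using ih.add hb

theorem Finset.sum_abs_le_of_forall_sum_ite_le {ι : Type*} [DecidableEq ι] {s : Finset ι}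
    {d : ι → X} {c : X} (h : ∀ u : Finset ι, ∑ j ∈ s, (if j ∈ u then d j else -d j) ≤ c) :
    ∑ j ∈ s, |d j| ≤ c := by
  induction s using Finset.cons_induction generalizing c with
  | empty => simpa using h ∅
  | cons a s ha ih =>
    have hsigned : ∀ w : Finset ι, (if a ∈ w then d a else -d a) + ∑ j ∈ s, |d j| ≤ c :=
      fun w => add_comm _ (∑ j ∈ s, |d j|) ▸ le_sub_iff_add_le.mp (ih fun v => by
        have hv := h (v.erase a ∪ w.filter (· = a))
        rw [Finset.sum_cons] at hv
        rw [le_sub_iff_add_le']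
        convert hv using 2
        · simp
        · refine Finset.sum_congr rfl fun j hj => ?_
          have : j ≠ a := fun h => ha (h ▸ hj)
          simp [this])
    rw [Finset.sum_cons, abs, sup_add]
    exact sup_le (by simpa using hsigned {a}) (by simpa using hsigned ∅)

theorem Finset.sum_abs_sub_le_of_forall_abs_sub_le {ι : Type*} [DecidableEq ι] {s : Finset ι}
    {x y : ι → X} {K J b : X}
    (h : ∀ u : Finset ι, |K + ∑ j ∈ s, (if j ∈ u then x j else y j) - J| ≤ b) :
    ∑ j ∈ s, |x j - y j| ≤ b + b := by
  refine Finset.sum_abs_le_of_forall_sum_ite_le fun u => ?_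
  have hdiff : ∑ j ∈ s, (if j ∈ u then x j - y j else -(x j - y j)) =
      (K + ∑ j ∈ s, (if j ∈ u then x j else y j) - J) -
        (K + ∑ j ∈ s, (if j ∈ s \ u then x j else y j) - J) := by
    rw [sub_sub_sub_cancel_right, add_sub_add_left_eq_sub, ← Finset.sum_sub_distrib]
    refine Finset.sum_congr rfl fun j hj => ?_
    by_cases hju : j ∈ u <;> simp [hj, hju]
  rw [hdiff, sub_eq_add_neg]
  exact add_le_add ((le_abs_self _).trans (h u)) ((neg_le_abs _).trans (h (s \ u)))

end LatticeOrderedGroup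

namespace TaggedPart

variable {T : Type*} [MeasurableSpace T] (P : TaggedPart T univ)

theorem exists_mem_E (x : T) : ∃ i, x ∈ P.E i :=
  mem_iUnion.mp (by rw [P.cover]; exact mem_univ x)

noncomputable def index (x : T) : Fin P.k := (P.exists_mem_E x).choose

theorem mem_E_index (x : T) : x ∈ P.E (P.index x) := (P.exists_mem_E x).choose_spec

theorem index_eq_of_mem {x : T} {i : Fin P.k} (hx : x ∈ P.E i) : P.index x = i := by
  by_contra h
  exact Set.disjoint_left.mp (P.disj _ _ h) (P.mem_E_index x) hx

end TaggedPart

section FineHenstockCover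

variable {T : Type*} [MeasurableSpace T] [PseudoMetricSpace T] {γ : T → ℝ}

/-- The pieces `G z`, `z ∈ Z`, form a `γ`-fine Henstock partition of `A` in which each piece is
tagged by its own index. -/
structure IsFineHenstockCover (γ : T → ℝ) (Z : Finset T) (G : T → Set T) (A : Set T) : Prop where
  measurableSet : ∀ z ∈ Z, MeasurableSet (G z)
  pairwiseDisjoint : (Z : Set T).PairwiseDisjoint G
  biUnion_eq : ⋃ z ∈ Z, G z = A
  mem : ∀ z ∈ Z, z ∈ G z
  dist_lt : ∀ z ∈ Z, ∀ w ∈ G z, dist w z < γ z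

namespace IsFineHenstockCover

variable {Z : Finset T} {G : T → Set T} {A : Set T}
  {ι : Type*} {s : Finset ι} {L : ι → Set T} {θ : ι → T}

theorem subset (h : IsFineHenstockCover γ Z G A) {z : T} (hz : z ∈ Z) : G z ⊆ A :=
  h.biUnion_eq ▸ subset_biUnion_of_mem (u := G) (Finset.mem_coe.mpr hz)

theorem exists_taggedPart (h : IsFineHenstockCover γ Z G A) {X : Type*} [AddCommMonoid X]
    [Module ℝ X] (f : T → X) (μ : Measure T) :
    ∃ P : TaggedPart T A, P.IsHenstock ∧ P.IsFine γ ∧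
      P.sum f μ = ∑ z ∈ Z, (μ (G z)).toReal • f z := by
  let e := Z.equivFin.symm
  refine ⟨⟨Z.card, fun i => G (e i), fun i => e i, fun i => h.measurableSet _ (e i).2,
    fun i j hij => h.pairwiseDisjoint (e i).2 (e j).2 fun h' => hij (e.injective (Subtype.ext h')),
    ?_⟩, fun i => h.mem _ (e i).2, fun i => h.dist_lt _ (e i).2, ?_⟩
  · rw [← h.biUnion_eq, e.surjective.iUnion_comp fun z : Z => G z]
    exact Set.iUnion_subtype (· ∈ Z) fun z => G z
  · exact (e.sum_comp fun z : Z => (μ (G z)).toReal • f z).trans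
      (Finset.sum_coe_sort Z fun z => (μ (G z)).toReal • f z)

theorem union [DecidableEq T] {Z' : Finset T} {G' : T → Set T} {A' : Set T}
    (h : IsFineHenstockCover γ Z G A) (h' : IsFineHenstockCover γ Z' G' A') (hA : Disjoint A A') :
    IsFineHenstockCover γ (Z ∪ Z') (fun z => if z ∈ Z then G z else G' z) (A ∪ A') := by
  have hZ : ∀ z ∈ Z', z ∉ Z := fun z hz' hz =>
    Set.disjoint_left.mp hA (h.subset hz (h.mem z hz)) (h'.subset hz' (h'.mem z hz'))
  refine ⟨fun z hz => ?_, fun z hz y hy hne => ?_, ?_, fun z hz => ?_, fun z hz => ?_⟩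
  · split_ifs with hzZ
    · exact h.measurableSet z hzZ
    · exact h'.measurableSet z ((Finset.mem_union.mp hz).resolve_left hzZ)
  · rw [Finset.coe_union, Set.mem_union, Finset.mem_coe, Finset.mem_coe] at hz hy
    simp only [Function.onFun]
    split_ifs with hzZ hyZ hyZ
    · exact h.pairwiseDisjoint hzZ hyZ hne
    · exact hA.mono (h.subset hzZ) (h'.subset (hy.resolve_left hyZ))
    · exact hA.symm.mono (h'.subset (hz.resolve_left hzZ)) (h.subset hyZ)
    · exact h'.pairwiseDisjoint (hz.resolve_left hzZ) (hy.resolve_left hyZ) hne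
  · rw [Finset.set_biUnion_union, ← h.biUnion_eq, ← h'.biUnion_eq]
    congr 1
    · exact Set.iUnion₂_congr fun z hz => if_pos hz
    · exact Set.iUnion₂_congr fun z hz => if_neg (hZ z hz)
  · split_ifs with hzZ
    · exact h.mem z hzZ
    · exact h'.mem z ((Finset.mem_union.mp hz).resolve_left hzZ)
  · split_ifs with hzZ
    · exact h.dist_lt z hzZ
    · exact h'.dist_lt z ((Finset.mem_union.mp hz).resolve_left hzZ)

theorem attach [DecidableEq T] (h : IsFineHenstockCover γ Z G A)
    (hLmeas : ∀ j ∈ s, MeasurableSet (L j)) (hLdisj : (s : Set ι).PairwiseDisjoint L) (hAL : ∀ j ∈ s, Disjoint A (L j))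
    (hθ : ∀ j ∈ s, θ j ∈ Z) (hLθ : ∀ j ∈ s, ∀ w ∈ L j, dist w (θ j) < γ (θ j)) :
    IsFineHenstockCover γ Z (fun z => G z ∪ ⋃ j ∈ s.filter (θ · = z), L j)
      (A ∪ ⋃ j ∈ s, L j) := by
  refine ⟨fun z hz => (h.measurableSet z hz).union (Finset.measurableSet_biUnion _
    fun j hj => hLmeas j (Finset.mem_filter.mp hj).1), fun z hz y hy hne => ?_, ?_,
    fun z hz => Or.inl (h.mem z hz), fun z hz w hw => ?_⟩
  · simp only [Function.onFun, Finset.mem_coe] at hz hy ⊢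
    refine Set.disjoint_union_left.mpr ⟨Set.disjoint_union_right.mpr
      ⟨h.pairwiseDisjoint hz hy hne, ?_⟩, Set.disjoint_union_right.mpr ⟨?_, ?_⟩⟩
    · exact Set.disjoint_iUnion₂_right.mpr fun j hj =>
        (hAL j (Finset.mem_filter.mp hj).1).mono_left (h.subset hz)
    · exact Set.disjoint_iUnion₂_left.mpr fun j hj =>
        ((hAL j (Finset.mem_filter.mp hj).1).mono_left (h.subset hy)).symm
    · refine Set.disjoint_iUnion₂_left.mpr fun j hj =>
        Set.disjoint_iUnion₂_right.mpr fun j' hj' => ?_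
      rw [Finset.mem_filter] at hj hj'
      exact hLdisj hj.1 hj'.1 fun hjj => hne (hj.2 ▸ hj'.2 ▸ hjj ▸ rfl)
  · rw [← h.biUnion_eq]
    ext x
    simp only [mem_iUnion, mem_union, Finset.mem_filter, exists_prop]
    constructor
    · rintro ⟨z, hz, hxG | ⟨j, ⟨hj, -⟩, hxL⟩⟩
      exacts [Or.inl ⟨z, hz, hxG⟩, Or.inr ⟨j, hj, hxL⟩]
    · rintro (⟨z, hz, hxG⟩ | ⟨j, hj, hxL⟩)
      exacts [⟨z, hz, Or.inl hxG⟩, ⟨θ j, hθ j hj, Or.inr ⟨j, ⟨hj, rfl⟩, hxL⟩⟩]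
  · obtain hwG | hwL := hw
    · exact h.dist_lt z hz w hwG
    · obtain ⟨j, hj, hwj⟩ := mem_iUnion₂.mp hwL
      obtain ⟨hjs, rfl⟩ := Finset.mem_filter.mp hj
      exact hLθ j hjs w hwj

theorem exists_taggedPart_attach [DecidableEq T] (h : IsFineHenstockCover γ Z G A)
    (hLmeas : ∀ j ∈ s, MeasurableSet (L j)) (hLdisj : (s : Set ι).PairwiseDisjoint L)
    (hAL : ∀ j ∈ s, Disjoint A (L j)) (hθ : ∀ j ∈ s, θ j ∈ Z)
    (hLθ : ∀ j ∈ s, ∀ w ∈ L j, dist w (θ j) < γ (θ j)) (hcover : A ∪ ⋃ j ∈ s, L j = univ)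
    {X : Type*} [AddCommMonoid X] [Module ℝ X] (f : T → X) (μ : Measure T) [IsFiniteMeasure μ] :
    ∃ P : TaggedPart T univ, P.IsHenstock ∧ P.IsFine γ ∧
      P.sum f μ = ∑ z ∈ Z, (μ (G z)).toReal • f z + ∑ j ∈ s, (μ (L j)).toReal • f (θ j) := by
  obtain ⟨P, hPH, hPf, hPsum⟩ :=
    (hcover ▸ h.attach hLmeas hLdisj hAL hθ hLθ).exists_taggedPart f μ
  refine ⟨P, hPH, hPf, hPsum.trans ?_⟩
  have hμ : ∀ z ∈ Z, (μ (G z ∪ ⋃ j ∈ s.filter (θ · = z), L j)).toReal =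
      (μ (G z)).toReal + ∑ j ∈ s.filter (θ · = z), (μ (L j)).toReal := fun z hz => by
    have hsub : ∀ j ∈ s.filter (θ · = z), j ∈ s := fun j hj => (Finset.mem_filter.mp hj).1
    rw [measure_union (Set.disjoint_iUnion₂_right.mpr fun j hj =>
        (hAL j (hsub j hj)).mono_left (h.subset hz))
        (Finset.measurableSet_biUnion _ fun j hj => hLmeas j (hsub j hj)),
      measure_biUnion_finset (hLdisj.subset fun j hj => hsub j hj) fun j hj => hLmeas j (hsub j hj),
      ENNReal.toReal_add (measure_ne_top _ _)
        (ENNReal.sum_ne_top.mpr fun _ _ => measure_ne_top _ _),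
      ENNReal.toReal_sum fun _ _ => measure_ne_top _ _]
  rw [Finset.sum_congr rfl fun z hz => by rw [hμ z hz, add_smul, Finset.sum_smul],
    Finset.sum_add_distrib, ← Finset.sum_fiberwise_of_maps_to hθ]
  congr 1
  exact Finset.sum_congr rfl fun z _ => Finset.sum_congr rfl fun j hj => by
    rw [(Finset.mem_filter.mp hj).2]

end IsFineHenstockCover

theorem isFineHenstockCover_singleton [MeasurableSingletonClass T] (hγ : IsGage γ) (Z : Finset T) :
    IsFineHenstockCover γ Z (fun z => {z}) Z where
  measurableSet _ _ := measurableSet_singleton _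
  pairwiseDisjoint _ _ _ _ h := Set.disjoint_singleton.mpr h
  biUnion_eq := Set.biUnion_of_singleton (Z : Set T)
  mem _ _ := rfl
  dist_lt z _ w hw := by simpa [Set.mem_singleton_iff.mp hw] using hγ z

end FineHenstockCover

section Disjointify

variable {T : Type*} [MeasurableSpace T] [PseudoMetricSpace T] [OpensMeasurableSpace T]
  [MeasurableSingletonClass T] {γ : T → ℝ}

theorem exists_isFineHenstockCover_compl_of_forall_exists_dist_lt (hγ : IsGage γ)
    {Z S : Finset T} (hZS : Disjoint Z S) (hZ : ∀ x ∉ S, ∃ z ∈ Z, dist x z < γ z) :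
    ∃ H : T → Set T, IsFineHenstockCover γ Z H (↑S)ᶜ := by
  -- each ball loses the balls with smaller centres, for some well-order of `T`
  let : LinearOrder T := WellOrderingRel.isWellOrder.linearOrder
  refine ⟨fun z => insert z ((Metric.ball z (γ z) \ ⋃ z' ∈ Z.filter (· < z), Metric.ball z' (γ z'))
    \ (↑Z ∪ ↑S)), fun z _ => ?_, fun z hz y hy hne => ?_, ?_, fun z _ => mem_insert z _,
    fun z _ w hw => ?_⟩
  · exact ((measurableSet_ball.diff (Finset.measurableSet_biUnion _ fun _ _ =>
      measurableSet_ball)).diff (Z.finite_toSet.union S.finite_toSet).measurableSet).insert z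
  · wlog hlt : z < y generalizing z y
    · exact (this y hy z hz hne.symm (lt_of_le_of_ne (not_lt.mp hlt) hne.symm)).symm
    refine Set.disjoint_left.mpr fun x hxz hxy => ?_
    rcases hxz with rfl | ⟨⟨hxz, -⟩, hxZS⟩
    · rcases hxy with rfl | ⟨-, hxZS⟩
      exacts [hne rfl, hxZS (Or.inl hz)]
    · rcases hxy with rfl | ⟨⟨-, hxy⟩, -⟩
      exacts [hxZS (Or.inl hy), hxy (mem_iUnion₂.mpr ⟨z, Finset.mem_filter.mpr ⟨hz, hlt⟩, hxz⟩)]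
  · ext x
    simp only [mem_iUnion, mem_compl_iff, Finset.mem_coe, exists_prop]
    constructor
    · rintro ⟨z, hz, rfl | ⟨-, hxZS⟩⟩
      exacts [Finset.disjoint_left.mp hZS hz, fun hx => hxZS (Or.inr hx)]
    · intro hxS
      by_cases hxZ : x ∈ Z
      · exact ⟨x, hxZ, mem_insert x _⟩
      obtain ⟨z₀, hz₀, hxz₀⟩ := hZ x hxS
      have hne : (Z.filter fun z => dist x z < γ z).Nonempty :=
        ⟨z₀, Finset.mem_filter.mpr ⟨hz₀, hxz₀⟩⟩
      obtain ⟨hz, hxz⟩ := Finset.mem_filter.mp (Finset.min'_mem _ hne)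
      refine ⟨_, hz, Or.inr ⟨⟨hxz, fun hx => ?_⟩, fun hx => hx.elim hxZ hxS⟩⟩
      obtain ⟨z', hz', hxz'⟩ := mem_iUnion₂.mp hx
      rw [Finset.mem_filter] at hz'
      exact not_le.mpr hz'.2 (Finset.min'_le _ z' (Finset.mem_filter.mpr ⟨hz'.1, hxz'⟩))
  · rcases hw with rfl | ⟨⟨hw, -⟩, -⟩
    · simpa using hγ w
    · exact hw

theorem exists_isFineHenstockCover_compl [CompactSpace T] (hγ : IsGage γ) {S C : Finset T}
    (hCS : Disjoint C S) (hS : ∀ x ∈ S, ∃ c ∉ S, dist x c < γ c) :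
    ∃ Z : Finset T, C ⊆ Z ∧ ∃ H : T → Set T, IsFineHenstockCover γ Z H (↑S)ᶜ := by
  classical
  have hcentre : ∀ x, ∃ c ∉ S, dist x c < γ c := fun x =>
    if hx : x ∈ S then hS x hx else ⟨x, hx, by simpa using hγ x⟩
  choose c hcS hxc using hcentre
  obtain ⟨t, ht⟩ := CompactSpace.elim_nhds_subcover (fun x => Metric.ball (c x) (γ (c x)))
    fun x => Metric.isOpen_ball.mem_nhds (hxc x)
  refine ⟨C ∪ t.image c, Finset.subset_union_left,
    exists_isFineHenstockCover_compl_of_forall_exists_dist_lt hγ ?_ fun x _ => ?_⟩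
  · refine Finset.disjoint_union_left.mpr ⟨hCS, Finset.disjoint_left.mpr fun z hz => ?_⟩
    obtain ⟨y, -, rfl⟩ := Finset.mem_image.mp hz
    exact hcS y
  · have hx : x ∈ ⋃ y ∈ t, Metric.ball (c y) (γ (c y)) := by rw [ht]; trivial
    obtain ⟨y, hy, hxy⟩ := mem_iUnion₂.mp hx
    exact ⟨c y, Finset.mem_union_right _ (Finset.mem_image_of_mem c hy), hxy⟩

end Disjointify

theorem Finset.exists_fin_three_coloring {α : Type*} [DecidableEq α] (q : α → α) (S : Finset α) :
    ∃ c : α → Fin 3, ∀ t ∈ S, q t ∈ S → q t ≠ t → c (q t) ≠ c t := by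
  induction S using Finset.strongInduction with
  | H S ih =>
  rcases S.eq_empty_or_nonempty with rfl | hS
  · exact ⟨0, by simp⟩
  -- some `t₀ ∈ S` is hit by `q` at most once, so it has at most two neighbours to avoid
  obtain ⟨t₀, ht₀, hfib⟩ :=
    Finset.exists_card_fiber_le_of_card_le_mul (s := S) (f := q) hS (n := 1) (by simp)
  obtain ⟨c, hc⟩ := ih (S.erase t₀) (Finset.erase_ssubset ht₀)
  obtain ⟨k, -, hk⟩ := Finset.exists_mem_notMem_of_card_lt_card
    (s := insert (c (q t₀)) ((S.filter (q · = t₀)).image c)) (t := Finset.univ) <| by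
      calc _ ≤ ((S.filter (q · = t₀)).image c).card + 1 := Finset.card_insert_le _ _
        _ ≤ 1 + 1 := by grw [Finset.card_image_le, hfib]
        _ < _ := by simp
  rw [Finset.mem_insert, not_or, Finset.mem_image, not_exists] at hk
  refine ⟨Function.update c t₀ k, fun t ht hqt hne => ?_⟩
  by_cases htt₀ : t = t₀
  · subst htt₀
    rw [Function.update_self, Function.update_of_ne hne]
    exact Ne.symm hk.1
  by_cases hqt₀ : q t = t₀
  · rw [hqt₀, Function.update_self, Function.update_of_ne htt₀]
    exact fun h => hk.2 t ⟨Finset.mem_filter.mpr ⟨ht, hqt₀⟩, h.symm⟩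
  · rw [Function.update_of_ne hqt₀, Function.update_of_ne htt₀]
    exact hc t (Finset.mem_erase.mpr ⟨htt₀, ht⟩) (Finset.mem_erase.mpr ⟨hqt₀, hqt⟩) hne

section Atoms

variable {T : Type*} [MeasurableSpace T] [MeasurableSingletonClass T]
  {X : Type*} [Lattice X] [AddCommGroup X] [IsOrderedAddMonoid X] [Module ℝ X]
  {μ : Measure T} [IsFiniteMeasure μ]

theorem TaggedPart.sum_abs_measure_inter_smul_le (P : TaggedPart T univ) (S : Finset T)
    (d : Fin P.k → X) :
    ∑ i, |(μ (P.E i ∩ S)).toReal • d i| ≤ ∑ t ∈ S, |(μ {t}).toReal • d (P.index t)| := by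
  classical
  have hpiece : ∀ i, (μ (P.E i ∩ S)).toReal • d i =
      ∑ t ∈ S.filter (P.index · = i), (μ {t}).toReal • d (P.index t) := fun i => by
    have hEi : P.E i ∩ S = ↑(S.filter (P.index · = i)) := by
      ext x
      simp only [mem_inter_iff, Finset.coe_filter, Finset.mem_coe, mem_ofPred_eq]
      exact ⟨fun hx => ⟨hx.2, P.index_eq_of_mem hx.1⟩,
        fun hx => ⟨hx.2 ▸ P.mem_E_index x, hx.1⟩⟩
    rw [hEi, ← sum_measure_singleton, ENNReal.toReal_sum fun _ _ => measure_ne_top _ _,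
      Finset.sum_smul]
    exact Finset.sum_congr rfl fun t ht => by rw [(Finset.mem_filter.mp ht).2]
  calc ∑ i, |(μ (P.E i ∩ S)).toReal • d i|
      ≤ ∑ i, ∑ t ∈ S.filter (P.index · = i), |(μ {t}).toReal • d (P.index t)| :=
        Finset.sum_le_sum fun i _ =>
          hpiece i ▸ Finset.le_sum_of_subadditive _ abs_zero.le abs_add_le _ _
    _ = _ := Finset.sum_fiberwise S P.index _

end Atoms

section Estimates

variable {T : Type*} [MeasurableSpace T] [PseudoMetricSpace T] [MeasurableSingletonClass T]
  {X : Type*} [Lattice X] [AddCommGroup X] [IsOrderedAddMonoid X] [Module ℝ X]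
  {μ : Measure T} [IsFiniteMeasure μ] {f : T → X} {J b : X} {γ : T → ℝ}

theorem sum_abs_measure_singleton_smul_sub_le_of_mapsTo_compl [OpensMeasurableSpace T]
    [CompactSpace T] (hγ : IsGage γ)
    (hb : ∀ P : TaggedPart T univ, P.IsHenstock → P.IsFine γ → |P.sum f μ - J| ≤ b)
    {S : Finset T} {q : T → T} (hqS : ∀ t ∈ S, q t ∉ S) (hq : ∀ t ∈ S, dist t (q t) < γ (q t)) :
    ∑ t ∈ S, |(μ {t}).toReal • f (q t) - (μ {t}).toReal • f t| ≤ b + b := by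
  classical
  obtain ⟨Z, hqZ, H, hH⟩ := exists_isFineHenstockCover_compl hγ (C := S.image q)
    (Finset.disjoint_left.mpr fun _ ht => by
      obtain ⟨t, hts, rfl⟩ := Finset.mem_image.mp ht
      exact hqS t hts)
    fun x hx => ⟨q x, hqS x hx, hq x hx⟩
  have hZS : ∀ z ∈ Z, z ∉ S := fun z hz => hH.subset hz (hH.mem z hz)
  refine Finset.sum_abs_sub_le_of_forall_abs_sub_le
    (K := ∑ z ∈ Z, (μ (H z)).toReal • f z) (J := J) fun u => ?_
  -- the points of `S ∩ u` join the pieces tagged `q t`, the other points of `S` stay alone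
  have hbase := hH.union (isFineHenstockCover_singleton hγ (S.filter (· ∉ u)))
    (Set.disjoint_compl_left_iff_subset.mpr fun t ht => (Finset.mem_filter.mp ht).1)
  obtain ⟨P, hPH, hPf, hPsum⟩ := hbase.exists_taggedPart_attach (s := S.filter (· ∈ u))
    (L := fun t => {t}) (θ := q) (fun _ _ => measurableSet_singleton _)
    (fun _ _ _ _ h => Set.disjoint_singleton.mpr h)
    (fun t ht => by
      rw [Finset.mem_filter] at ht
      simp [ht.1, ht.2])
    (fun t ht => Finset.mem_union_left _
      (hqZ (Finset.mem_image_of_mem q (Finset.mem_filter.mp ht).1)))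
    (fun t ht w hw => (mem_singleton_iff.mp hw) ▸ hq t (Finset.mem_filter.mp ht).1)
    (by
      ext x
      by_cases hxS : x ∈ S <;> by_cases hxu : x ∈ u <;> simp [hxS, hxu]) f μ
  have hZsum : ∑ z ∈ Z, (μ (if z ∈ Z then H z else {z})).toReal • f z =
      ∑ z ∈ Z, (μ (H z)).toReal • f z :=
    Finset.sum_congr rfl fun z hz => by rw [if_pos hz]
  have hSsum : ∑ t ∈ S.filter (· ∉ u), (μ (if t ∈ Z then H t else {t})).toReal • f t =
      ∑ t ∈ S.filter (· ∉ u), (μ {t}).toReal • f t :=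
    Finset.sum_congr rfl fun t ht => by
      rw [if_neg fun htZ => hZS t htZ (Finset.mem_filter.mp ht).1]
  refine le_of_eq_of_le ?_ (hb P hPH hPf)
  rw [hPsum, Finset.sum_union (Finset.disjoint_left.mpr fun z hz ht =>
    hZS z hz (Finset.mem_filter.mp ht).1), hZsum, hSsum, Finset.sum_ite]
  abel_nf

theorem sum_abs_measure_singleton_smul_sub_le [OpensMeasurableSpace T] [CompactSpace T]
    (hγ : IsGage γ)
    (hb : ∀ P : TaggedPart T univ, P.IsHenstock → P.IsFine γ → |P.sum f μ - J| ≤ b)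
    (S : Finset T) {q : T → T} (hq : ∀ t ∈ S, dist t (q t) < γ (q t)) :
    ∑ t ∈ S, |(μ {t}).toReal • f (q t) - (μ {t}).toReal • f t| ≤ 6 • b := by
  classical
  obtain ⟨c, hc⟩ := S.exists_fin_three_coloring q
  let S' := S.filter fun t => q t ≠ t
  have hclass : ∀ k, ∑ t ∈ S'.filter (c · = k), |(μ {t}).toReal • f (q t) - (μ {t}).toReal • f t|
      ≤ b + b := fun k =>
    sum_abs_measure_singleton_smul_sub_le_of_mapsTo_compl hγ hb
      (fun t ht hqt => by
        simp only [S', Finset.mem_filter] at ht hqt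
        exact hc t ht.1.1 hqt.1.1 ht.1.2 (hqt.2.trans ht.2.symm))
      fun t ht => hq t (Finset.mem_filter.mp (Finset.mem_filter.mp ht).1).1
  calc ∑ t ∈ S, |(μ {t}).toReal • f (q t) - (μ {t}).toReal • f t|
      = ∑ k, ∑ t ∈ S'.filter (c · = k), |(μ {t}).toReal • f (q t) - (μ {t}).toReal • f t| := by
        rw [Finset.sum_fiberwise]
        exact (Finset.sum_filter_of_ne (p := fun t => q t ≠ t)
          fun t _ h hqt => h (by simp [hqt])).symm
    _ ≤ ∑ _k : Fin 3, (b + b) := Finset.sum_le_sum fun k _ => hclass k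
    _ = 6 • b := by simp only [Finset.sum_const, Finset.card_univ, Fintype.card_fin]; abel

theorem sum_abs_measure_sdiff_smul_sub_le (hγ : IsGage γ)
    (hb : ∀ P : TaggedPart T univ, P.IsHenstock → P.IsFine γ → |P.sum f μ - J| ≤ b)
    (P : TaggedPart T univ) {τ τ' : Fin P.k → T}
    (hτ : ∀ i, ∀ w ∈ P.E i, dist w (τ i) < γ (τ i))
    (hτ' : ∀ i, ∀ w ∈ P.E i, dist w (τ' i) < γ (τ' i))
    {S : Finset T} (hτS : ∀ i, τ i ∈ S) (hτ'S : ∀ i, τ' i ∈ S) :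
    ∑ i, |(μ (P.E i \ S)).toReal • f (τ i) - (μ (P.E i \ S)).toReal • f (τ' i)| ≤ b + b := by
  classical
  refine Finset.sum_abs_sub_le_of_forall_abs_sub_le
    (K := ∑ t ∈ S, (μ {t}).toReal • f t) (J := J) fun u => ?_
  -- once the tags are singletons, each `P.E i \ S` may join either of its two tags
  obtain ⟨Q, hQH, hQf, hQsum⟩ := (isFineHenstockCover_singleton hγ S).exists_taggedPart_attach
    (s := Finset.univ) (L := fun i => P.E i \ S) (θ := fun i => if i ∈ u then τ i else τ' i)
    (fun i _ => (P.meas i).diff S.finite_toSet.measurableSet)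
    (fun i _ j _ hij => (P.disj i j hij).mono Set.sdiff_subset Set.sdiff_subset)
    (fun _ _ => Set.disjoint_sdiff_right)
    (fun i _ => by split_ifs; exacts [hτS i, hτ'S i])
    (fun i _ w hw => by split_ifs; exacts [hτ i w hw.1, hτ' i w hw.1])
    (Set.eq_univ_of_forall fun x => (em (x ∈ S)).elim Or.inl fun hx =>
      Or.inr (mem_iUnion₂.mpr ⟨P.index x, Finset.mem_univ _, P.mem_E_index x, hx⟩)) f μ
  refine le_of_eq_of_le ?_ (hb Q hQH hQf)
  rw [hQsum]
  congr 3
  exact Finset.sum_congr rfl fun i _ => by split_ifs <;> rfl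

theorem sum_abs_measure_smul_sub_le [OpensMeasurableSpace T] [CompactSpace T] (hγ : IsGage γ)
    (hb : ∀ P : TaggedPart T univ, P.IsHenstock → P.IsFine γ → |P.sum f μ - J| ≤ b)
    (P : TaggedPart T univ) (τ' : Fin P.k → T) (hτ : P.IsFine γ)
    (hτ' : ∀ i, ∀ w ∈ P.E i, dist w (τ' i) < γ (τ' i)) :
    ∑ i, |(μ (P.E i)).toReal • f (P.tag i) - (μ (P.E i)).toReal • f (τ' i)| ≤ 14 • b := by
  classical
  let S := Finset.univ.image P.tag ∪ Finset.univ.image τ'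
  have hsplit : ∀ i, |(μ (P.E i)).toReal • f (P.tag i) - (μ (P.E i)).toReal • f (τ' i)| ≤
      |(μ (P.E i \ S)).toReal • f (P.tag i) - (μ (P.E i \ S)).toReal • f (τ' i)| +
        |(μ (P.E i ∩ S)).toReal • (f (P.tag i) - f (τ' i))| := fun i => by
    rw [← measure_sdiff_add_inter (P.E i) S.finite_toSet.measurableSet,
      ENNReal.toReal_add (measure_ne_top _ _) (measure_ne_top _ _), ← smul_sub, ← smul_sub,
      add_smul]
    exact abs_add_le _ _
  have hatoms : ∑ i, |(μ (P.E i ∩ S)).toReal • (f (P.tag i) - f (τ' i))| ≤ 6 • b + 6 • b := by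
    have htriangle : ∀ x y z : X, |x - y| ≤ |x - z| + |y - z| := fun x y z => by
      simpa [abs_sub_comm z y] using abs_add_le (x - z) (z - y)
    -- an atom `t ∈ S` is compared with each tag of its piece through `f t`
    calc _ ≤ ∑ t ∈ S, |(μ {t}).toReal • (f (P.tag (P.index t)) - f (τ' (P.index t)))| :=
          P.sum_abs_measure_inter_smul_le S _
      _ ≤ ∑ t ∈ S, (|(μ {t}).toReal • f (P.tag (P.index t)) - (μ {t}).toReal • f t| +
            |(μ {t}).toReal • f (τ' (P.index t)) - (μ {t}).toReal • f t|) :=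
          Finset.sum_le_sum fun t _ => by rw [smul_sub]; exact htriangle _ _ _
      _ ≤ 6 • b + 6 • b := Finset.sum_add_distrib.trans_le <| add_le_add
          (sum_abs_measure_singleton_smul_sub_le hγ hb S fun t _ => hτ _ t (P.mem_E_index t))
          (sum_abs_measure_singleton_smul_sub_le hγ hb S fun t _ => hτ' _ t (P.mem_E_index t))
  calc _ ≤ ∑ i, (|(μ (P.E i \ S)).toReal • f (P.tag i) - (μ (P.E i \ S)).toReal • f (τ' i)| +
          |(μ (P.E i ∩ S)).toReal • (f (P.tag i) - f (τ' i))|) :=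
        Finset.sum_le_sum fun i _ => hsplit i
    _ ≤ (b + b) + (6 • b + 6 • b) := Finset.sum_add_distrib.trans_le <| add_le_add
        (sum_abs_measure_sdiff_smul_sub_le hγ hb P hτ hτ' (by simp [S]) (by simp [S])) hatoms
    _ = 14 • b := by abel

end Estimates

theorem oH_two_tag_henstock_lemma_general {T : Type*} [MetricSpace T] [CompactSpace T] [MeasurableSpace T] [BorelSpace T]
    (μ : Measure T) [IsFiniteMeasure μ]
    {X : Type*} [NormedAddCommGroup X] [Lattice X] [HasSolidNorm X] [IsOrderedAddMonoid X] [NormedSpace ℝ X]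
    (f : T → X) (J : X)
    (hf : HasOHIntegralOn f μ Set.univ J) :
    ∃ b : ℕ → X, IsOSeq b ∧ ∃ γ : ℕ → T → ℝ, (∀ n, IsGage (γ n)) ∧
      ∀ n (P : TaggedPart T (Set.univ : Set T)) (τ' : Fin P.k → T),
        P.IsFine (γ n) →
        (∀ i, ∀ w ∈ P.E i, dist w (τ' i) < γ n (τ' i)) →
        ∑ i, |(μ (P.E i)).toReal • f (P.tag i) - (μ (P.E i)).toReal • f (τ' i)| ≤ b n := by
  obtain ⟨b, hb, γ, hγ, hbound⟩ := hf
  exact ⟨14 • b, hb.nsmul 14, γ, hγ, fun n P τ' hτ hτ' =>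
    sum_abs_measure_smul_sub_le (hγ n) (hbound n) P τ' hτ hτ'⟩

theorem oH_two_tag_henstock_lemma {T : Type*} [MetricSpace T] [CompactSpace T] [MeasurableSpace T] [BorelSpace T]
    (μ : Measure T) [IsFiniteMeasure μ] [μ.Regular]
    {X : Type*} [NormedAddCommGroup X] [Lattice X] [HasSolidNorm X] [IsOrderedAddMonoid X] [NormedSpace ℝ X] [CompleteSpace X]
    (hDC : ∀ s : Set X, s.Nonempty → BddAbove s → ∃ x, IsLUB s x) (f : T → X) (J : X)
    (hf : HasOHIntegralOn f μ Set.univ J) :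
    ∃ b : ℕ → X, IsOSeq b ∧ ∃ γ : ℕ → T → ℝ, (∀ n, IsGage (γ n)) ∧
      ∀ n (P : TaggedPart T (Set.univ : Set T)) (τ' : Fin P.k → T),
        P.IsFine (γ n) →
        (∀ i, ∀ w ∈ P.E i, dist w (τ' i) < γ n (τ' i)) →
        ∑ i, |(μ (P.E i)).toReal • f (P.tag i) - (μ (P.E i)).toReal • f (τ' i)| ≤ b n :=
  oH_two_tag_henstock_lemma_general μ f J hf
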